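/- arXiv:1701.07412 — 2 statements merged into one kernel-verified Lean document; each statement's English description precedes it below -/
import Mathlib

section
/- For all a, b, c ∈ ℂ, the three-qutrit vector Ψ_{3,3}(a,b,c) = a(|000⟩+|111⟩+|222⟩) + b(|012⟩+|201⟩+|120⟩) + c(|021⟩+|210⟩+|102⟩) ∈ (ℂ³)^{⊗3} satisfies (S_{3,k} ⊗ S_{3,k} ⊗ S_{3,k}) Ψ_{3,3}(a,b,c) = Ψ_{3,3}(a,b,c) for every k ∈ {0,1,2}². -/
/-!
`X₃^{⊗3}` translates a basis vector `|x₀x₁x₂⟩` by `(1,1,1)`, and the three patterns defining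
`Ψ_{3,3}` only constrain the differences `x₁ - x₀`, `x₂ - x₀`. `Z₃^{⊗3}` multiplies `|x₀x₁x₂⟩`
by `ω₃^{x₀+x₁+x₂}`, and every basis vector in the support of `Ψ_{3,3}` has
`x₀ + x₁ + x₂ ≡ 0 (mod 3)`. As `A ↦ ⊗ₗ A` is multiplicative, invariance under `X₃` and `Z₃`
gives invariance under every `S_{3,k} = X₃^{k₁} Z₃^{k₂}`.
-/

open scoped BigOperators ComplexOrder

namespace Paper

noncomputable section

/-- Base-2 Shannon entropy of a finitely indexed probability vector. -/
def shannon {α : Type*} [Fintype α] (p : α → ℝ) : ℝ :=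
  ∑ a, -(p a * Real.logb 2 (p a))

/-- Joint outcome type for `n` subsystems of local dimension `d`. -/
abbrev Idx (n d : ℕ) := Fin n → Fin d

/-- The projector `|ψ⟩⟨ψ|`. -/
def proj {α : Type*} (ψ : α → ℂ) : Matrix α α ℂ :=
  Matrix.of fun x y => ψ x * (starRingEnd ℂ) (ψ y)

/-- A density operator: positive semidefinite with trace one. -/
def IsDensityOp {α : Type*} [Fintype α] [DecidableEq α] (ρ : Matrix α α ℂ) : Prop :=
  ρ.PosSemidef ∧ ρ.trace = 1

/-- `B` is an orthonormal basis of `ℂ^d` (`B i` is the `i`-th basis vector). -/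
def IsONB {d : ℕ} (B : Fin d → Fin d → ℂ) : Prop :=
  ∀ i j, (∑ x, (starRingEnd ℂ) (B i x) * B j x) = if i = j then 1 else 0

/-- Two bases of `ℂ^d` are mutually unbiased. -/
def MutUnbiased {d : ℕ} (B B' : Fin d → Fin d → ℂ) : Prop :=
  ∀ i j, ‖∑ x, (starRingEnd ℂ) (B i x) * B' j x‖ ^ 2 = 1 / d

/-- Joint outcome distribution of measuring the orthonormal basis `B l` on each factor `l`. -/
def jointProb {n d : ℕ} (ρ : Matrix (Idx n d) (Idx n d) ℂ)
    (B : Fin n → Fin d → Fin d → ℂ) (i : Idx n d) : ℝ :=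
  (∑ x : Idx n d, ∑ y : Idx n d,
    (∏ l, (starRingEnd ℂ) (B l (i l) (x l))) * ρ x y * (∏ l, B l (i l) (y l))).re

/-- Marginal distribution of subsystem `l`. -/
def margAt {n d : ℕ} (p : Idx n d → ℝ) (l : Fin n) (i : Fin d) : ℝ :=
  ∑ x : Idx n d, if x l = i then p x else 0

/-- Insert outcome `i` at position `l` into a tuple of outcomes of the other subsystems. -/
def insertAt {n d : ℕ} (l : Fin n) (i : Fin d) (g : {m : Fin n // m ≠ l} → Fin d) : Idx n d :=
  fun m => if h : m = l then i else g ⟨m, h⟩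

/-- Marginal distribution of all subsystems except `l`. -/
def margRest {n d : ℕ} (p : Idx n d → ℝ) (l : Fin n)
    (g : {m : Fin n // m ≠ l} → Fin d) : ℝ :=
  ∑ i : Fin d, p (insertAt l i g)

/-- Mutual information `I(B⁽ˡ⁾ : B⁽ˡ̄⁾)` between the outcome at subsystem `l` and the
outcomes at the remaining subsystems, for the joint outcome distribution `p`. -/
def mutualInfo {n d : ℕ} (p : Idx n d → ℝ) (l : Fin n) : ℝ :=
  shannon (margAt p l) + shannon (margRest p l) - shannon p

/-- The correlation function `C_N(ρ, {B_k^{(l)}})`. -/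
def CNval {n d : ℕ} (N : ℕ) (ρ : Matrix (Idx n d) (Idx n d) ℂ)
    (B : Fin N → Fin n → Fin d → Fin d → ℂ) : ℝ :=
  (1 / (n * N)) * ∑ k, ∑ l, mutualInfo (jointProb ρ (B k)) l

/-- `B k l` is, for each subsystem `l`, a family of `N` pairwise mutually unbiased
orthonormal bases (indexed by `k`). -/
def ValidMUBs {n d : ℕ} (N : ℕ) (B : Fin N → Fin n → Fin d → Fin d → ℂ) : Prop :=
  (∀ k l, IsONB (B k l)) ∧ ∀ l k k', k ≠ k' → MutUnbiased (B k l) (B k' l)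

/-- The set of values `C_N(ρ, ·)` over all admissible choices of MUBs;
`𝒞_N(ρ)` is the supremum of this set. -/
def CNvalues {n d : ℕ} (N : ℕ) (ρ : Matrix (Idx n d) (Idx n d) ℂ) : Set ℝ :=
  {x | ∃ B : Fin N → Fin n → Fin d → Fin d → ℂ, ValidMUBs N B ∧ x = CNval N ρ B}

/-- Single-subsystem reduced state `tr_{l̄} ρ`. -/
def reducedAt {n d : ℕ} (ρ : Matrix (Idx n d) (Idx n d) ℂ) (l : Fin n) :
    Matrix (Fin d) (Fin d) ℂ :=
  Matrix.of fun i j =>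
    ∑ g : {m : Fin n // m ≠ l} → Fin d, ρ (insertAt l i g) (insertAt l j g)

/-- `ω_d = exp(2πi/d)`. -/
def ω (d : ℕ) : ℂ := Complex.exp (2 * Real.pi * Complex.I / d)

/-- The generalized Pauli operator `X_d`. -/
def Xmat (d : ℕ) : Matrix (Fin d) (Fin d) ℂ :=
  Matrix.of fun i j => if (i : ℕ) = ((j : ℕ) + 1) % d then 1 else 0

/-- The generalized Pauli operator `Z_d`. -/
def Zmat (d : ℕ) : Matrix (Fin d) (Fin d) ℂ :=
  Matrix.of fun i j => if i = j then ω d ^ (i : ℕ) else 0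

/-- The generalized Pauli operator `S_{d,(k₁,k₂)} = X_d^{k₁} Z_d^{k₂}`. -/
def Smat (d : ℕ) (k : Fin d × Fin d) : Matrix (Fin d) (Fin d) ℂ :=
  Xmat d ^ (k.1 : ℕ) * Zmat d ^ (k.2 : ℕ)

/-- Apply a local operator `A l` to each tensor factor of a multipartite vector `ψ`,
i.e. the vector `(⊗_l A l) ψ`. -/
def applyLocal {n d : ℕ} (A : Fin n → Matrix (Fin d) (Fin d) ℂ) (ψ : Idx n d → ℂ) :
    Idx n d → ℂ :=
  fun x => ∑ y : Idx n d, (∏ l, A l (x l) (y l)) * ψ y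

/-- The computational (standard) basis of `ℂ^d`, the eigenbasis of `Z_d`. -/
def stdBasis (d : ℕ) : Fin d → Fin d → ℂ :=
  fun i x => if x = i then 1 else 0

/-- The Fourier basis of `ℂ^d`, the eigenbasis of `X_d`. -/
def fourierBasis (d : ℕ) : Fin d → Fin d → ℂ :=
  fun i x => (((Real.sqrt d)⁻¹ : ℝ) : ℂ) * ω d ^ ((i : ℕ) * (x : ℕ))

/-- The `n`-fold tensor product `⊗_l A l` as a matrix on the joint system. -/
def tensorN {n d : ℕ} (A : Fin n → Matrix (Fin d) (Fin d) ℂ) :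
    Matrix (Idx n d) (Idx n d) ℂ :=
  Matrix.of fun x y => ∏ l, A l (x l) (y l)

/-- Full separability of an `n`-partite density operator. -/
def FullySep {n d : ℕ} (ρ : Matrix (Idx n d) (Idx n d) ℂ) : Prop :=
  ∃ (J : ℕ) (p : Fin J → ℝ) (σ : Fin J → Fin n → Matrix (Fin d) (Fin d) ℂ),
    (∀ j, 0 ≤ p j) ∧ (∑ j, p j) = 1 ∧ (∀ j l, IsDensityOp (σ j l)) ∧
    ρ = ∑ j, p j • tensorN (σ j)

/-- generalized GHZ state `(1/√d) ∑_i |i⟩^{⊗n}`. -/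
def GHZvec (d n : ℕ) : Idx n d → ℂ :=
  fun x => if ∀ l l', x l = x l' then (((Real.sqrt d)⁻¹ : ℝ) : ℂ) else 0


/-- The three-qutrit states `Ψ_{3,3}(a,b,c)`. -/
def Psi33 (a b c : ℂ) : Idx 3 3 → ℂ :=
  fun x =>
    (if x 1 = x 0 ∧ x 2 = x 0 then a else 0) +
    (if x 1 = x 0 + 1 ∧ x 2 = x 0 + 2 then b else 0) +
    (if x 1 = x 0 + 2 ∧ x 2 = x 0 + 1 then c else 0)


lemma AddChar.map_sum_eq_prod {ι A M : Type*} [AddCommMonoid A] [CommMonoid M] (ψ : AddChar A M)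
    (s : Finset ι) (f : ι → A) : ψ (∑ i ∈ s, f i) = ∏ i ∈ s, ψ (f i) := by
  classical
  induction s using Finset.induction_on with
  | empty => simp
  | insert i s hi ih => rw [Finset.sum_insert hi, Finset.prod_insert hi, ψ.map_add_eq_mul, ih]

section applyLocal

open scoped Matrix

variable {n d : ℕ}

lemma applyLocal_eq_mulVec (A : Fin n → Matrix (Fin d) (Fin d) ℂ) (ψ : Idx n d → ℂ) :
    applyLocal A ψ = tensorN A *ᵥ ψ :=
  rfl

lemma tensorN_mul (A B : Fin n → Matrix (Fin d) (Fin d) ℂ) :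
    tensorN (A * B) = tensorN A * tensorN B := by
  ext x y
  simp only [tensorN, Matrix.of_apply, Pi.mul_apply, Matrix.mul_apply, Fintype.prod_sum,
    Finset.prod_mul_distrib]

lemma tensorN_one : tensorN (1 : Fin n → Matrix (Fin d) (Fin d) ℂ) = 1 := by
  ext x y
  simp only [tensorN, Matrix.of_apply, Pi.one_apply, Matrix.one_apply, Finset.prod_ite_zero,
    Finset.prod_const_one, Finset.mem_univ, true_implies, funext_iff]

lemma applyLocal_mul (A B : Fin n → Matrix (Fin d) (Fin d) ℂ) (ψ : Idx n d → ℂ) :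
    applyLocal (A * B) ψ = applyLocal A (applyLocal B ψ) := by
  simp only [applyLocal_eq_mulVec, tensorN_mul, Matrix.mulVec_mulVec]

lemma applyLocal_one (ψ : Idx n d → ℂ) : applyLocal 1 ψ = ψ := by
  rw [applyLocal_eq_mulVec, tensorN_one, Matrix.one_mulVec]

lemma applyLocal_pow_eq_self {A : Fin n → Matrix (Fin d) (Fin d) ℂ} {ψ : Idx n d → ℂ}
    (h : applyLocal A ψ = ψ) (m : ℕ) : applyLocal (A ^ m) ψ = ψ := by
  induction m with
  | zero => exact applyLocal_one ψ
  | succ m ih => rw [pow_succ, applyLocal_mul, h, ih]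

lemma tensorN_diagonal (D : Fin n → Fin d → ℂ) :
    tensorN (fun l => Matrix.diagonal (D l)) = Matrix.diagonal fun x => ∏ l, D l (x l) := by
  ext x y
  simp only [tensorN, Matrix.of_apply, Matrix.diagonal_apply, Finset.prod_ite_zero,
    Finset.mem_univ, true_implies, funext_iff]

lemma applyLocal_diagonal (D : Fin n → Fin d → ℂ) (ψ : Idx n d → ℂ) (x : Idx n d) :
    applyLocal (fun l => Matrix.diagonal (D l)) ψ x = (∏ l, D l (x l)) * ψ x := by
  rw [applyLocal_eq_mulVec, tensorN_diagonal, Matrix.mulVec_diagonal]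

lemma tensorN_toMatrix_toPEquiv (σ : Fin d ≃ Fin d) :
    tensorN (fun _ : Fin n => σ.toPEquiv.toMatrix) =
      (Equiv.piCongrRight fun _ : Fin n => σ).toPEquiv.toMatrix := by
  ext x y
  simp [tensorN, PEquiv.toMatrix_apply, Finset.prod_ite_zero, funext_iff]

lemma applyLocal_toMatrix_toPEquiv (σ : Fin d ≃ Fin d) (ψ : Idx n d → ℂ) :
    applyLocal (fun _ => σ.toPEquiv.toMatrix) ψ = ψ ∘ Equiv.piCongrRight fun _ => σ := by
  rw [applyLocal_eq_mulVec, tensorN_toMatrix_toPEquiv, PEquiv.toMatrix_toPEquiv_mulVec]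

end applyLocal

section pauli

variable (d : ℕ) [NeZero d]

lemma ω_pow_self : ω d ^ d = 1 :=
  (Complex.isPrimitiveRoot_exp d (NeZero.ne d)).pow_eq_one

def ωChar : AddChar (Fin d) ℂ where
  toFun i := ω d ^ (i : ℕ)
  map_zero_eq_one' := by simp
  map_add_eq_mul' i j := by
    rw [Fin.val_add, ← pow_eq_pow_mod _ (ω_pow_self d), pow_add]

lemma Zmat_eq_diagonal : Zmat d = Matrix.diagonal (ωChar d) := by
  ext i j
  simp [Zmat, Matrix.diagonal_apply, ωChar]

lemma Xmat_eq_toMatrix : Xmat d = (Equiv.subRight (1 : Fin d)).toPEquiv.toMatrix := by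
  ext i j
  have h : ((i : ℕ) = ((j : ℕ) + 1) % d) ↔ i - 1 = j := by
    rw [sub_eq_iff_eq_add, Fin.ext_iff, Fin.val_add, Fin.val_one', Nat.add_mod_mod]
  simp [Xmat, PEquiv.toMatrix_apply, h]

variable {d} {n : ℕ}

lemma applyLocal_Xmat_apply (ψ : Idx n d → ℂ) (x : Idx n d) :
    applyLocal (fun _ => Xmat d) ψ x = ψ (fun l => x l - 1) := by
  rw [Xmat_eq_toMatrix, applyLocal_toMatrix_toPEquiv]
  rfl

lemma applyLocal_Zmat_apply (ψ : Idx n d → ℂ) (x : Idx n d) :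
    applyLocal (fun _ => Zmat d) ψ x = ωChar d (∑ l, x l) * ψ x := by
  rw [Zmat_eq_diagonal, applyLocal_diagonal, AddChar.map_sum_eq_prod]

lemma applyLocal_Zmat_eq_self {ψ : Idx n d → ℂ} (h : ∀ x, ∑ l, x l ≠ 0 → ψ x = 0) :
    applyLocal (fun _ => Zmat d) ψ = ψ := by
  funext x
  rw [applyLocal_Zmat_apply]
  by_cases hx : ∑ l, x l = 0
  · rw [hx, AddChar.map_zero_eq_one, one_mul]
  · rw [h x hx, mul_zero]

end pauli

lemma Psi33_sub_const (a b c : ℂ) (x : Idx 3 3) (t : Fin 3) :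
    Psi33 a b c (fun l => x l - t) = Psi33 a b c x := by
  simp only [Psi33, sub_add_eq_add_sub, sub_left_inj]

lemma Psi33_eq_zero_of_sum_ne_zero (a b c : ℂ) {x : Idx 3 3} (hx : ∑ l, x l ≠ 0) :
    Psi33 a b c x = 0 := by
  have support : ∀ i : Fin 3,
      i + i + i = 0 ∧ i + (i + 1) + (i + 2) = 0 ∧ i + (i + 2) + (i + 1) = 0 := by
    decide
  rw [Fin.sum_univ_three] at hx
  simp only [Psi33]
  split_ifs <;> simp_all

/-- `Ψ_{3,3}(a,b,c)` is invariant under `S_{3,k} ⊗ S_{3,k} ⊗ S_{3,k}` for every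
`k ∈ {0,1,2}²`. -/
theorem Psi33_pauli_symmetry (a b c : ℂ) (k : Fin 3 × Fin 3) :
    applyLocal (fun _ : Fin 3 => Smat 3 k) (Psi33 a b c) = Psi33 a b c := by
  have hX : applyLocal (fun _ => Xmat 3) (Psi33 a b c) = Psi33 a b c :=
    funext fun x => (applyLocal_Xmat_apply _ x).trans (Psi33_sub_const a b c x 1)
  have hZ : applyLocal (fun _ => Zmat 3) (Psi33 a b c) = Psi33 a b c :=
    applyLocal_Zmat_eq_self fun _ => Psi33_eq_zero_of_sum_ne_zero a b c
  have hS : (fun _ : Fin 3 => Smat 3 k) =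
      (fun _ => Xmat 3) ^ (k.1 : ℕ) * (fun _ => Zmat 3) ^ (k.2 : ℕ) := rfl
  rw [hS, applyLocal_mul, applyLocal_pow_eq_self hZ, applyLocal_pow_eq_self hX]

end
end Paper
end

section
/- Let d ≥ 2 and let |𝒮_d⟩ = (1/√(d!)) ∑_{i_1,…,i_d=0}^{d−1} ε_{i_1,…,i_d} |i_1 … i_d⟩ ∈ (ℂ^d)^{⊗d} be the Aharonov (totally antisymmetric) state, where ε is the generalized Levi-Civita symbol. Then for every orthonormal basis B of ℂ^d measured on all d subsystems and for every subsystem l ∈ {1,…,d}, the mutual information between the outcome at subsystem l and the outcomes at the remaining subsystems equals log₂ d. Consequently, whenever a set of N mutually unbiased bases exists on ℂ^d, 𝒞_N(𝒮_d) = log₂ d, the maximal value. -/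
open scoped BigOperators ComplexOrder

namespace Paper

noncomputable section

/-- The Aharonov (totally antisymmetric) state `|𝒮_d⟩` of `d` qudits. -/
def aharonov (d : ℕ) : Idx d d → ℂ :=
  fun x =>
    if h : Function.Bijective x then
      (((Real.sqrt (Nat.factorial d))⁻¹ : ℝ) : ℂ) *
        (((Equiv.Perm.sign (Equiv.ofBijective x h) : ℤ) : ℂ))
    else 0

/-! Measuring one orthonormal basis `B` on every factor of `|𝒮_d⟩` yields the outcome tuple `i`
with amplitude `det (B (i l) m)ₗₘ / √d!`. This determinant vanishes when `i` has a repeated entry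
and otherwise has modulus one, `B` being unitary, so the outcomes form a uniformly random
permutation of `Fin d`. Hence the outcome at one site is uniform, contributing `log₂ d`, and is
determined by the outcomes at the other sites, so that `H(l̄) = H(joint)` and the mutual information
is exactly `log₂ d`. For every joint distribution `H(l̄) ≤ H(joint)` and `H(l) ≤ log₂ d` bound it
by `log₂ d`, so averaging over bases and sites shows that `𝒮_d` attains the maximal value of `C_N`.
-/

open Real
open scoped Matrix

lemma shannon_eq_sum_negMulLog {α : Type*} [Fintype α] (p : α → ℝ) :
    shannon p = (∑ a, negMulLog (p a)) / log 2 := by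
  simp only [shannon, negMulLog, logb, Finset.sum_div]
  congr 1 with a
  ring

lemma shannon_const_inv_card (α : Type*) [Fintype α] :
    shannon (fun _ : α => ((Fintype.card α : ℝ))⁻¹) = logb 2 (Fintype.card α) := by
  rcases eq_or_ne (Fintype.card α : ℝ) 0 with h | h
  · simp [shannon, h]
  · simp only [shannon, logb_inv, Finset.sum_const, Finset.card_univ, nsmul_eq_mul]
    field_simp

lemma sum_negMulLog_le_log_card {α : Type*} [Fintype α] {p : α → ℝ} (h0 : ∀ a, 0 ≤ p a)
    (h1 : ∑ a, p a = 1) : ∑ a, negMulLog (p a) ≤ log (Fintype.card α) := by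
  have hn : (0 : ℝ) < Fintype.card α := by
    have : Nonempty α := by
      by_contra h
      simp [not_nonempty_iff.mp h] at h1
    exact_mod_cast Fintype.card_pos
  have jensen := concaveOn_negMulLog.le_map_sum (t := Finset.univ)
    (w := fun _ => (Fintype.card α : ℝ)⁻¹) (p := p) (fun _ _ => by positivity)
    (by simp [hn.ne']) (fun a _ => Set.mem_Ici.mpr (h0 a))
  rw [← Finset.smul_sum, ← Finset.smul_sum, h1, smul_eq_mul, smul_eq_mul, mul_one,
    negMulLog, log_inv, neg_mul_neg] at jensen
  exact le_of_mul_le_mul_left jensen (inv_pos.mpr hn)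

lemma shannon_le_logb_card {α : Type*} [Fintype α] {p : α → ℝ} (h0 : ∀ a, 0 ≤ p a)
    (h1 : ∑ a, p a = 1) : shannon p ≤ logb 2 (Fintype.card α) := by
  rw [shannon_eq_sum_negMulLog, logb]
  exact div_le_div_of_nonneg_right (sum_negMulLog_le_log_card h0 h1) (log_nonneg one_le_two)

lemma negMulLog_sum_le {ι : Type*} (s : Finset ι) {q : ι → ℝ} (hq : ∀ i ∈ s, 0 ≤ q i) :
    negMulLog (∑ i ∈ s, q i) ≤ ∑ i ∈ s, negMulLog (q i) := by
  rw [negMulLog, neg_mul, Finset.sum_mul, ← Finset.sum_neg_distrib]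
  refine Finset.sum_le_sum fun i hi => ?_
  rcases (hq i hi).eq_or_lt with h | h
  · simp [← h]
  · rw [negMulLog, neg_mul, neg_le_neg_iff]
    exact mul_le_mul_of_nonneg_left
      (log_le_log h (Finset.single_le_sum hq hi)) h.le

lemma negMulLog_sum_of_support_subsingleton {ι : Type*} [Fintype ι] {q : ι → ℝ}
    (hq : (Function.support q).Subsingleton) :
    negMulLog (∑ i, q i) = ∑ i, negMulLog (q i) := by
  by_cases h : ∃ i, q i ≠ 0
  · obtain ⟨i, hi⟩ := h
    have hzero : ∀ j ≠ i, q j = 0 := fun j hj => by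
      by_contra hj'
      exact hj (hq hj' hi)
    rw [Fintype.sum_eq_single i hzero, Fintype.sum_eq_single i fun j hj => by simp [hzero j hj]]
  · push Not at h
    simp [h]

section Marginals

variable {n d : ℕ}

lemma funSplitAt_symm_eq_insertAt (l : Fin n) (i : Fin d) (g : {m : Fin n // m ≠ l} → Fin d) :
    (Equiv.funSplitAt l (Fin d)).symm (i, g) = insertAt l i g := by
  funext m
  by_cases h : m = l <;> simp [Equiv.funSplitAt, insertAt, h]

lemma sum_eq_sum_insertAt {M : Type*} [AddCommMonoid M] (l : Fin n) (F : Idx n d → M) :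
    ∑ x, F x = ∑ g, ∑ i, F (insertAt l i g) := by
  rw [← (Equiv.funSplitAt l (Fin d)).symm.sum_comp, Fintype.sum_prod_type, Finset.sum_comm]
  simp only [funSplitAt_symm_eq_insertAt]

lemma sum_margAt (p : Idx n d → ℝ) (l : Fin n) : ∑ i, margAt p l i = ∑ x, p x := by
  simp only [margAt]
  rw [Finset.sum_comm]
  simp

lemma margAt_nonneg {p : Idx n d → ℝ} (h0 : ∀ x, 0 ≤ p x) (l : Fin n) (i : Fin d) :
    0 ≤ margAt p l i :=
  Finset.sum_nonneg fun x _ => by split_ifs <;> simp [h0 x]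

lemma shannon_margRest_le {p : Idx n d → ℝ} (h0 : ∀ x, 0 ≤ p x) (l : Fin n) :
    shannon (margRest p l) ≤ shannon p := by
  rw [shannon_eq_sum_negMulLog, shannon_eq_sum_negMulLog, sum_eq_sum_insertAt l]
  gcongr with g
  exact negMulLog_sum_le _ fun i _ => h0 _

lemma shannon_margRest_eq_of_support_subsingleton {p : Idx n d → ℝ} (l : Fin n)
    (hp : ∀ g, (Function.support fun i => p (insertAt l i g)).Subsingleton) :
    shannon (margRest p l) = shannon p := by
  rw [shannon_eq_sum_negMulLog, shannon_eq_sum_negMulLog, sum_eq_sum_insertAt l]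
  simp only [margRest, negMulLog_sum_of_support_subsingleton (hp _)]

lemma mutualInfo_le_logb {p : Idx n d → ℝ} (h0 : ∀ x, 0 ≤ p x) (h1 : ∑ x, p x = 1)
    (l : Fin n) : mutualInfo p l ≤ logb 2 d := by
  have hmarg := shannon_le_logb_card (margAt_nonneg h0 l) (by rw [sum_margAt, h1])
  rw [Fintype.card_fin] at hmarg
  have hrest := shannon_margRest_le h0 l
  rw [mutualInfo]
  linarith

lemma margAt_apply_perm {p : Idx n d → ℝ} (hp : ∀ (σ : Equiv.Perm (Fin d)) x, p (σ ∘ x) = p x)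
    (l : Fin n) (σ : Equiv.Perm (Fin d)) (i : Fin d) : margAt p l (σ i) = margAt p l i := by
  simp only [margAt]
  rw [← (Equiv.arrowCongr (Equiv.refl (Fin n)) σ).sum_comp]
  refine Finset.sum_congr rfl fun x _ => ?_
  have hx : (Equiv.arrowCongr (Equiv.refl (Fin n)) σ) x = σ ∘ x := rfl
  simp [hx, hp]

lemma margAt_eq_inv_of_perm_invariant {p : Idx n d → ℝ}
    (hp : ∀ (σ : Equiv.Perm (Fin d)) x, p (σ ∘ x) = p x) (h1 : ∑ x, p x = 1) (l : Fin n) :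
    margAt p l = fun _ => (d : ℝ)⁻¹ := by
  funext i
  have hconst : ∀ j, margAt p l j = margAt p l i := fun j => by
    simpa using margAt_apply_perm hp l (Equiv.swap i j) i
  rw [← sum_margAt p l, Finset.sum_congr rfl fun j _ => hconst j] at h1
  simp only [Finset.sum_const, Finset.card_univ, Fintype.card_fin, nsmul_eq_mul] at h1
  exact eq_inv_of_mul_eq_one_right h1

lemma eq_of_injective_insertAt {l i i' : Fin d} {g : {m : Fin d // m ≠ l} → Fin d}
    (hi : Function.Injective (insertAt l i g)) (hi' : Function.Injective (insertAt l i' g)) :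
    i = i' := by
  obtain ⟨m, hm⟩ := Finite.injective_iff_surjective.mp hi i'
  by_cases h : m = l
  · simpa [insertAt, h] using hm
  · have : insertAt l i' g m = insertAt l i' g l := by simpa [insertAt, h] using hm
    exact absurd (hi' this) h

end Marginals

section Measurement

variable {n d : ℕ}

lemma IsONB.transpose_mem_unitaryGroup {B : Fin d → Fin d → ℂ} (hB : IsONB B) :
    (Matrix.of B)ᵀ ∈ Matrix.unitaryGroup (Fin d) ℂ := by
  rw [Matrix.mem_unitaryGroup_iff']
  ext i j
  simpa [Matrix.mul_apply, Matrix.one_apply] using hB i j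

lemma tensorN_mem_unitaryGroup {U : Fin n → Matrix (Fin d) (Fin d) ℂ}
    (hU : ∀ l, U l ∈ Matrix.unitaryGroup (Fin d) ℂ) :
    tensorN U ∈ Matrix.unitaryGroup (Idx n d) ℂ := by
  rw [Matrix.mem_unitaryGroup_iff']
  ext i j
  have hfactor : ∀ l, ∑ y, star (U l y (i l)) * U l y (j l) = if i l = j l then 1 else 0 :=
    fun l => by
      simpa [Matrix.mul_apply, Matrix.one_apply] using
        congrFun₂ (Matrix.mem_unitaryGroup_iff'.mp (hU l)) (i l) (j l)
  calc (star (tensorN U) * tensorN U) i j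
      = ∏ l, ∑ y, star (U l y (i l)) * U l y (j l) := by
        rw [Finset.prod_univ_sum]
        simp [Matrix.mul_apply, tensorN, Finset.prod_mul_distrib]
    _ = (1 : Matrix (Idx n d) (Idx n d) ℂ) i j := by
        simp only [hfactor, Finset.prod_boole, Matrix.one_apply, funext_iff]
        simp

lemma jointProb_eq_re_diag (ρ : Matrix (Idx n d) (Idx n d) ℂ) (B : Fin n → Fin d → Fin d → ℂ)
    (i : Idx n d) :
    jointProb ρ B i =
      ((star (tensorN fun l => (Matrix.of (B l))ᵀ) * ρ * tensorN fun l => (Matrix.of (B l))ᵀ)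
        i i).re := by
  simp only [jointProb, Matrix.mul_apply, Finset.sum_mul]
  rw [Finset.sum_comm]
  simp [tensorN]

lemma sum_jointProb {ρ : Matrix (Idx n d) (Idx n d) ℂ} {B : Fin n → Fin d → Fin d → ℂ}
    (hB : ∀ l, IsONB (B l)) : ∑ i, jointProb ρ B i = ρ.trace.re := by
  set W := tensorN fun l => (Matrix.of (B l))ᵀ
  have hW : W * star W = 1 := Matrix.mem_unitaryGroup_iff.mp
    (tensorN_mem_unitaryGroup fun l => (hB l).transpose_mem_unitaryGroup)
  calc ∑ i, jointProb ρ B i = (star W * ρ * W).trace.re := by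
        simp [jointProb_eq_re_diag, W, Matrix.trace]
    _ = ρ.trace.re := by rw [Matrix.trace_mul_cycle, hW, one_mul]

lemma jointProb_proj (ψ : Idx n d → ℂ) (B : Fin n → Fin d → Fin d → ℂ) (i : Idx n d) :
    jointProb (proj ψ) B i =
      Complex.normSq (∑ x, (∏ l, (starRingEnd ℂ) (B l (i l) (x l))) * ψ x) := by
  rw [jointProb, ← Complex.ofReal_re (Complex.normSq _), ← Complex.mul_conj,
    map_sum, Finset.sum_mul_sum]
  simp only [proj, Matrix.of_apply, map_mul, map_prod, Complex.conj_conj]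
  congr 1
  refine Finset.sum_congr rfl fun x _ => Finset.sum_congr rfl fun y _ => ?_
  ring

lemma jointProb_proj_nonneg (ψ : Idx n d → ℂ) (B : Fin n → Fin d → Fin d → ℂ) (i : Idx n d) :
    0 ≤ jointProb (proj ψ) B i := by
  rw [jointProb_proj]
  exact Complex.normSq_nonneg _

lemma IsONB.normSq_det {B : Fin d → Fin d → ℂ} (hB : IsONB B) :
    Complex.normSq (Matrix.of B).det = 1 := by
  have := Matrix.det_of_mem_unitary hB.transpose_mem_unitaryGroup
  rw [Matrix.det_transpose, Unitary.mem_iff_star_mul_self] at this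
  exact_mod_cast Complex.normSq_eq_conj_mul_self.trans this

lemma trace_proj (ψ : Idx n d → ℂ) : (proj ψ).trace = ∑ x, (Complex.normSq (ψ x) : ℂ) := by
  simp [Matrix.trace, proj, Complex.mul_conj]

end Measurement

section Aharonov

variable {d : ℕ}

lemma aharonov_perm (σ : Equiv.Perm (Fin d)) :
    aharonov d σ = (((Real.sqrt d.factorial)⁻¹ : ℝ) : ℂ) * ((Equiv.Perm.sign σ : ℤ) : ℂ) := by
  rw [aharonov, dif_pos σ.bijective]
  congr
  exact Equiv.ext fun _ => rfl

lemma sum_mul_aharonov (f : Idx d d → ℂ) :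
    ∑ x, f x * aharonov d x =
      (((Real.sqrt d.factorial)⁻¹ : ℝ) : ℂ) *
        ∑ σ : Equiv.Perm (Fin d), (Equiv.Perm.sign σ : ℤ) * f σ := by
  rw [Finset.mul_sum]
  refine (Fintype.sum_of_injective _ DFunLike.coe_injective _ _ (fun x hx => ?_)
    fun σ => ?_).symm
  · have hnb : ¬ Function.Bijective x := fun h => hx ⟨Equiv.ofBijective x h, rfl⟩
    simp only [aharonov, dif_neg hnb, mul_zero]
  · rw [aharonov_perm]
    ring

lemma normSq_aharonov (x : Idx d d) :
    Complex.normSq (aharonov d x) = if Function.Bijective x then (d.factorial : ℝ)⁻¹ else 0 := by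
  unfold aharonov
  split_ifs with h
  · rcases Int.units_eq_one_or (Equiv.Perm.sign (Equiv.ofBijective x h)) with hs | hs <;>
      simp [hs, Complex.normSq_ofReal, Real.mul_self_sqrt]
  · simp

lemma sum_normSq_aharonov : ∑ x, Complex.normSq (aharonov d x) = 1 := by
  rw [← Fintype.sum_of_injective _ DFunLike.coe_injective
    (fun _ : Equiv.Perm (Fin d) => (d.factorial : ℝ)⁻¹) _ (fun x hx => ?_) fun σ => ?_]
  · simp [Fintype.card_perm, d.factorial_ne_zero]
  · have hnb : ¬ Function.Bijective x := fun h => hx ⟨Equiv.ofBijective x h, rfl⟩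
    rw [normSq_aharonov, if_neg hnb]
  · rw [normSq_aharonov, if_pos σ.bijective]

lemma trace_proj_aharonov : (proj (aharonov d)).trace = 1 := by
  rw [trace_proj, ← Complex.ofReal_sum, sum_normSq_aharonov, Complex.ofReal_one]

lemma normSq_det_submatrix {B : Fin d → Fin d → ℂ} (hB : IsONB B) (i : Fin d → Fin d) :
    Complex.normSq ((Matrix.of B).submatrix i id).det = if Function.Injective i then 1 else 0 := by
  split_ifs with hi
  · let σ := Equiv.ofBijective i (Finite.injective_iff_bijective.mp hi)
    rw [show i = σ from rfl, Matrix.det_permute, Complex.normSq_mul, hB.normSq_det]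
    rcases Int.units_eq_one_or (Equiv.Perm.sign σ) with hs | hs <;> simp [hs]
  · obtain ⟨a, b, hab, hne⟩ := Function.not_injective_iff.mp hi
    rw [Matrix.det_zero_of_row_eq hne (by ext; simp [hab]), map_zero]

lemma jointProb_aharonov {B : Fin d → Fin d → ℂ} (hB : IsONB B) (i : Idx d d) :
    jointProb (proj (aharonov d)) (fun _ => B) i =
      if Function.Injective i then (d.factorial : ℝ)⁻¹ else 0 := by
  have hamp : ∑ x, (∏ l, (starRingEnd ℂ) (B (i l) (x l))) * aharonov d x =
      (((Real.sqrt d.factorial)⁻¹ : ℝ) : ℂ) * star ((Matrix.of B).submatrix i id).det := by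
    rw [sum_mul_aharonov, ← Matrix.det_conjTranspose, Matrix.det_apply]
    simp [Matrix.conjTranspose_apply, Units.smul_def]
  rw [jointProb_proj, hamp, Complex.normSq_mul, Complex.normSq_ofReal, ← mul_inv,
    Real.mul_self_sqrt (Nat.cast_nonneg _), Complex.star_def, Complex.normSq_conj,
    normSq_det_submatrix hB]
  simp

lemma sum_jointProb_aharonov {B : Fin d → Fin d → Fin d → ℂ} (hB : ∀ l, IsONB (B l)) :
    ∑ i, jointProb (proj (aharonov d)) B i = 1 := by
  rw [sum_jointProb hB, trace_proj_aharonov, Complex.one_re]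

lemma mutualInfo_aharonov_le {B : Fin d → Fin d → Fin d → ℂ} (hB : ∀ l, IsONB (B l))
    (l : Fin d) : mutualInfo (jointProb (proj (aharonov d)) B) l ≤ logb 2 d :=
  mutualInfo_le_logb (jointProb_proj_nonneg _ B) (sum_jointProb_aharonov hB) l

theorem mutualInfo_aharonov {B : Fin d → Fin d → ℂ} (hB : IsONB B) (l : Fin d) :
    mutualInfo (jointProb (proj (aharonov d)) (fun _ => B)) l = logb 2 d := by
  set p := jointProb (proj (aharonov d)) (fun _ => B)
  have hp : ∀ x, p x = if Function.Injective x then (d.factorial : ℝ)⁻¹ else 0 :=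
    jointProb_aharonov hB
  have hsum : ∑ x, p x = 1 := sum_jointProb_aharonov fun _ => hB
  have hperm : ∀ (σ : Equiv.Perm (Fin d)) x, p (σ ∘ x) = p x := fun σ x => by
    simp only [hp, σ.comp_injective]
  have hsupp : ∀ x, p x ≠ 0 → Function.Injective x := fun x hx =>
    by_contra fun h => hx (by rw [hp, if_neg h])
  have hrest : ∀ g, (Function.support fun i => p (insertAt l i g)).Subsingleton :=
    fun _ _ hi _ hi' => eq_of_injective_insertAt (hsupp _ hi) (hsupp _ hi')
  rw [mutualInfo, margAt_eq_inv_of_perm_invariant hperm hsum,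
    shannon_margRest_eq_of_support_subsingleton l hrest]
  simpa using shannon_const_inv_card (Fin d)

end Aharonov

section Correlation

variable {n d N : ℕ} {ρ : Matrix (Idx n d) (Idx n d) ℂ} {B : Fin N → Fin n → Fin d → Fin d → ℂ}

lemma CNval_le_of_forall_mutualInfo_le {L : ℝ} (hL : 0 ≤ L)
    (h : ∀ k l, mutualInfo (jointProb ρ (B k)) l ≤ L) :
    CNval N ρ B ≤ L := by
  have hsum : ∑ k, ∑ l, mutualInfo (jointProb ρ (B k)) l ≤ n * N * L := by
    calc ∑ k, ∑ l, mutualInfo (jointProb ρ (B k)) l ≤ ∑ _k : Fin N, ∑ _l : Fin n, L := by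
          gcongr with k _ l _; exact h k l
      _ = n * N * L := by
          simp only [Finset.sum_const, Finset.card_univ, Fintype.card_fin, nsmul_eq_mul]; ring
  calc CNval N ρ B ≤ 1 / (n * N) * (n * N * L) := by
        rw [CNval]; gcongr
    _ = (n * N) / (n * N) * L := by ring
    _ ≤ L := mul_le_of_le_one_left hL (div_self_le_one _)

lemma CNval_eq_of_forall_mutualInfo_eq (hn : n ≠ 0) (hN : N ≠ 0) {L : ℝ}
    (h : ∀ k l, mutualInfo (jointProb ρ (B k)) l = L) : CNval N ρ B = L := by
  simp only [CNval, h, Finset.sum_const, Finset.card_univ, Fintype.card_fin, nsmul_eq_mul]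
  field_simp

end Correlation

/-- Measuring any single orthonormal basis on all subsystems of the Aharonov state gives
mutual information `log₂ d` between each subsystem and the rest; consequently `𝒮_d`
maximizes `𝒞_N` whenever `N ≥ 2` mutually unbiased bases exist on `ℂ^d`. -/
theorem aharonov_maximizes_CN (d : ℕ) (hd : 2 ≤ d) :
    (∀ B : Fin d → Fin d → ℂ, IsONB B → ∀ l : Fin d,
      mutualInfo (jointProb (proj (aharonov d)) (fun _ => B)) l = Real.logb 2 d) ∧
    ∀ N : ℕ, 2 ≤ N →
      (∃ B : Fin N → Fin d → Fin d → ℂ, (∀ k, IsONB (B k)) ∧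
        ∀ k k', k ≠ k' → MutUnbiased (B k) (B k')) →
      IsGreatest (CNvalues N (proj (aharonov d))) (Real.logb 2 d) := by
  refine ⟨fun B hB l => mutualInfo_aharonov hB l, fun N hN ⟨B, hONB, hMUB⟩ => ⟨?_, ?_⟩⟩
  · refine ⟨fun k _ => B k, ⟨fun k _ => hONB k, fun _ k k' h => hMUB k k' h⟩, ?_⟩
    exact (CNval_eq_of_forall_mutualInfo_eq (by omega) (by omega)
      fun k l => mutualInfo_aharonov (hONB k) l).symm
  · rintro _ ⟨B', hB', rfl⟩
    exact CNval_le_of_forall_mutualInfo_le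
      (logb_nonneg one_lt_two (by exact_mod_cast (by omega : 1 ≤ d)))
      fun k l => mutualInfo_aharonov_le (hB'.1 k) l

end
end Paper
end
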